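/- Let r,s,t,u be integers. The assignment a ↦ a·b, b ↦ b, c ↦ c induces a well-defined automorphism θ of the presented group G(r,s,t,u). Moreover, if s is even, then φ₄ ∘ θ = φ₂ and φ₇ ∘ θ = φ₆, where φ₂, φ₄, φ₆, φ₇ : G(r,s,t,u) → ℤ/2ℤ are the homomorphisms determined on the generators (a,b,c) by (0,1,0), (1,1,0), (0,1,1), (1,1,1) respectively. -/

import Mathlib

/-- The relators of the presentation of the fundamental group of the sapphire
Sol 3-manifold determined by the matrix `[[r, s], [t, u]]`:
`a·b·a⁻¹·b`, `c²·a^(−2r)·b^(−s)` and `c·a^(2t)·b^u·c⁻¹·a^(2t)·b^u`,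
where `a, b, c` are the generators `of 0, of 1, of 2`. -/
def sapphireRels (r s t u : ℤ) : Set (FreeGroup (Fin 3)) :=
  { FreeGroup.of 0 * FreeGroup.of 1 * (FreeGroup.of 0)⁻¹ * FreeGroup.of 1,
    FreeGroup.of 2 ^ (2 : ℤ) * FreeGroup.of 0 ^ (-(2 * r)) * FreeGroup.of 1 ^ (-s),
    FreeGroup.of 2 * FreeGroup.of 0 ^ (2 * t) * FreeGroup.of 1 ^ u * (FreeGroup.of 2)⁻¹ *
      FreeGroup.of 0 ^ (2 * t) * FreeGroup.of 1 ^ u }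

/-- The fundamental group `G(r,s,t,u)` of the sapphire Sol 3-manifold. -/
abbrev SapphireGroup (r s t u : ℤ) := PresentedGroup (sapphireRels r s t u)

/-!
The relator `a b a⁻¹ b` says that `a` conjugates `b` to `b⁻¹`, so `b^n a = a b^(-n)` and
hence `(a b^n)² = a²`. The substitution `a ↦ a b^n` therefore fixes every even power of `a`,
which is all that the other two relators see, and it respects the first relator as well.
These shears compose additively, so the shear by `1` is an automorphism with inverse the shear
by `-1`. A homomorphism to `ℤ/2ℤ` composed with it sends `a` to the sum of its values on `a`
and `b`, which gives the identities between `φ₂, φ₄, φ₆, φ₇`.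
-/

section ConjInv

variable {G : Type*} [Group G] {x y : G}

theorem conj_zpow_eq_zpow_neg_of_mul_mul_inv_mul_eq_one (h : x * y * x⁻¹ * y = 1) (n : ℤ) :
    x * y ^ n * x⁻¹ = y ^ (-n) := by
  rw [← conj_zpow, eq_inv_of_mul_eq_one_left h, inv_zpow, zpow_neg]

theorem mul_zpow_mul_self_of_mul_mul_inv_mul_eq_one (h : x * y * x⁻¹ * y = 1) (n : ℤ) :
    x * y ^ n * (x * y ^ n) = x * x := by
  have hcomm : y ^ n * x = x * y ^ (-n) := by
    have hconj := conj_zpow_eq_zpow_neg_of_mul_mul_inv_mul_eq_one h (-n)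
    rw [neg_neg] at hconj
    rw [← hconj]
    group
  calc x * y ^ n * (x * y ^ n) = x * (y ^ n * x) * y ^ n := by group
    _ = x * x := by rw [hcomm]; group

theorem mul_zpow_zpow_two_mul_of_mul_mul_inv_mul_eq_one (h : x * y * x⁻¹ * y = 1) (n k : ℤ) :
    (x * y ^ n) ^ (2 * k) = x ^ (2 * k) := by
  rw [zpow_mul, zpow_mul, zpow_two, zpow_two, mul_zpow_mul_self_of_mul_mul_inv_mul_eq_one h]

end ConjInv

namespace SapphireGroup

variable {r s t u : ℤ} {G : Type*} [Group G] {x y z : G}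

structure IsSapphireTriple (r s t u : ℤ) (x y z : G) : Prop where
  rel_conj_inv : x * y * x⁻¹ * y = 1
  rel_sq : z ^ (2 : ℤ) * x ^ (-(2 * r)) * y ^ (-s) = 1
  rel_conj : z * x ^ (2 * t) * y ^ u * z⁻¹ * x ^ (2 * t) * y ^ u = 1

theorem isSapphireTriple_of :
    IsSapphireTriple r s t u (PresentedGroup.of 0 : SapphireGroup r s t u)
      (PresentedGroup.of 1) (PresentedGroup.of 2) where
  rel_conj_inv := PresentedGroup.one_of_mem (by simp [sapphireRels])
  rel_sq := PresentedGroup.one_of_mem (by simp [sapphireRels])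
  rel_conj := PresentedGroup.one_of_mem (by simp [sapphireRels])

theorem IsSapphireTriple.mul_zpow (h : IsSapphireTriple r s t u x y z) (n : ℤ) :
    IsSapphireTriple r s t u (x * y ^ n) y z where
  rel_conj_inv := by
    rw [show x * y ^ n * y * (x * y ^ n)⁻¹ * y = x * y * x⁻¹ * y by group]
    exact h.rel_conj_inv
  rel_sq := by
    simpa only [neg_mul_eq_mul_neg,
      mul_zpow_zpow_two_mul_of_mul_mul_inv_mul_eq_one h.rel_conj_inv] using h.rel_sq
  rel_conj := by
    simpa only [mul_zpow_zpow_two_mul_of_mul_mul_inv_mul_eq_one h.rel_conj_inv] using h.rel_conj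

theorem IsSapphireTriple.lift_eq_one (h : IsSapphireTriple r s t u x y z) :
    ∀ w ∈ sapphireRels r s t u, FreeGroup.lift ![x, y, z] w = 1 := by
  rintro w (rfl | rfl | rfl) <;> simp only [map_mul, map_inv, map_zpow, FreeGroup.lift_apply_of,
    Matrix.cons_val_zero, Matrix.cons_val_one, Matrix.cons_val_two, Matrix.head_cons,
    Matrix.tail_cons]
  exacts [h.rel_conj_inv, h.rel_sq, h.rel_conj]

def lift (h : IsSapphireTriple r s t u x y z) : SapphireGroup r s t u →* G :=
  PresentedGroup.toGroup h.lift_eq_one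

section Lift

variable (h : IsSapphireTriple r s t u x y z)

@[simp] theorem lift_of_zero : lift h (PresentedGroup.of 0) = x := PresentedGroup.toGroup.of _
@[simp] theorem lift_of_one : lift h (PresentedGroup.of 1) = y := PresentedGroup.toGroup.of _
@[simp] theorem lift_of_two : lift h (PresentedGroup.of 2) = z := PresentedGroup.toGroup.of _

end Lift

theorem hom_ext {f g : SapphireGroup r s t u →* G}
    (h₀ : f (PresentedGroup.of 0) = g (PresentedGroup.of 0))
    (h₁ : f (PresentedGroup.of 1) = g (PresentedGroup.of 1))
    (h₂ : f (PresentedGroup.of 2) = g (PresentedGroup.of 2)) : f = g :=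
  PresentedGroup.ext fun i => by fin_cases i <;> assumption

/-- The endomorphism `a ↦ a b^n`, `b ↦ b`, `c ↦ c`. -/
def shear (r s t u n : ℤ) : SapphireGroup r s t u →* SapphireGroup r s t u :=
  lift (isSapphireTriple_of.mul_zpow n)

theorem shear_comp_shear (m n : ℤ) :
    (shear r s t u m).comp (shear r s t u n) = shear r s t u (m + n) :=
  hom_ext (by simp [shear, zpow_add, mul_assoc]) (by simp [shear]) (by simp [shear])

theorem shear_zero : shear r s t u 0 = MonoidHom.id _ :=
  hom_ext (by simp [shear]) (by simp [shear]) (by simp [shear])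

def shearEquiv (r s t u n : ℤ) : SapphireGroup r s t u ≃* SapphireGroup r s t u :=
  MonoidHom.toMulEquiv (shear r s t u n) (shear r s t u (-n))
    (by rw [shear_comp_shear, neg_add_cancel, shear_zero])
    (by rw [shear_comp_shear, add_neg_cancel, shear_zero])

end SapphireGroup

theorem stmt9 (r s t u : ℤ) :
    ∃ θ : SapphireGroup r s t u ≃* SapphireGroup r s t u,
      θ (PresentedGroup.of 0) = PresentedGroup.of 0 * PresentedGroup.of 1 ∧
      θ (PresentedGroup.of 1) = PresentedGroup.of 1 ∧
      θ (PresentedGroup.of 2) = PresentedGroup.of 2 ∧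
      (Even s →
        ∀ φ₂ φ₄ φ₆ φ₇ : SapphireGroup r s t u →* Multiplicative (ZMod 2),
          (φ₂ (PresentedGroup.of 0) = Multiplicative.ofAdd (0 : ZMod 2) ∧
           φ₂ (PresentedGroup.of 1) = Multiplicative.ofAdd (1 : ZMod 2) ∧
           φ₂ (PresentedGroup.of 2) = Multiplicative.ofAdd (0 : ZMod 2)) →
          (φ₄ (PresentedGroup.of 0) = Multiplicative.ofAdd (1 : ZMod 2) ∧
           φ₄ (PresentedGroup.of 1) = Multiplicative.ofAdd (1 : ZMod 2) ∧
           φ₄ (PresentedGroup.of 2) = Multiplicative.ofAdd (0 : ZMod 2)) →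
          (φ₆ (PresentedGroup.of 0) = Multiplicative.ofAdd (0 : ZMod 2) ∧
           φ₆ (PresentedGroup.of 1) = Multiplicative.ofAdd (1 : ZMod 2) ∧
           φ₆ (PresentedGroup.of 2) = Multiplicative.ofAdd (1 : ZMod 2)) →
          (φ₇ (PresentedGroup.of 0) = Multiplicative.ofAdd (1 : ZMod 2) ∧
           φ₇ (PresentedGroup.of 1) = Multiplicative.ofAdd (1 : ZMod 2) ∧
           φ₇ (PresentedGroup.of 2) = Multiplicative.ofAdd (1 : ZMod 2)) →
          φ₄.comp θ.toMonoidHom = φ₂ ∧ φ₇.comp θ.toMonoidHom = φ₆) := by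
  have ha : SapphireGroup.shearEquiv r s t u 1 (PresentedGroup.of 0) =
      PresentedGroup.of 0 * PresentedGroup.of 1 := by
    simp [SapphireGroup.shearEquiv, SapphireGroup.shear]
  have hb : SapphireGroup.shearEquiv r s t u 1 (PresentedGroup.of 1) = PresentedGroup.of 1 := by
    simp [SapphireGroup.shearEquiv, SapphireGroup.shear]
  have hc : SapphireGroup.shearEquiv r s t u 1 (PresentedGroup.of 2) = PresentedGroup.of 2 := by
    simp [SapphireGroup.shearEquiv, SapphireGroup.shear]
  refine ⟨SapphireGroup.shearEquiv r s t u 1, ha, hb, hc, fun _ φ₂ φ₄ φ₆ φ₇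
    ⟨h₂a, h₂b, h₂c⟩ ⟨h₄a, h₄b, h₄c⟩ ⟨h₆a, h₆b, h₆c⟩ ⟨h₇a, h₇b, h₇c⟩ => ⟨?_, ?_⟩⟩
  · refine SapphireGroup.hom_ext ?_ (by simp [hb, h₄b, h₂b]) (by simp [hc, h₄c, h₂c])
    simp only [MonoidHom.comp_apply, MulEquiv.coe_toMonoidHom, ha, map_mul, h₄a, h₄b, h₂a]
    rfl
  · refine SapphireGroup.hom_ext ?_ (by simp [hb, h₇b, h₆b]) (by simp [hc, h₇c, h₆c])
    simp only [MonoidHom.comp_apply, MulEquiv.coe_toMonoidHom, ha, map_mul, h₇a, h₇b, h₆a]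
    rfl
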